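/- Let D be a dyadic grid on ℝ^d, let m,n ∈ ℤ_{≥0}, and for each Q ∈ D and each pair of subcubes Q', Q'' ⊂ Q with ℓ(Q') = 2^{-m}ℓ(Q), ℓ(Q'') = 2^{-n}ℓ(Q), let h_{Q'}^{Q''} and h_{Q''}^{Q'} be Haar functions (constant on children, supported on Q' resp. Q'') with ‖h_{Q'}^{Q''} h_{Q''}^{Q'}‖_∞ ≤ 1. Then for all x ≠ y, |Σ_{Q ∈ D} (1/|Q|) Σ_{Q',Q''⊂Q}^{(m,n)} h_{Q'}^{Q''}(x) h_{Q''}^{Q'}(y)| ≤ C(d)/|x − y|^d. -/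

import Mathlib

noncomputable section
open MeasureTheory Metric Set

abbrev Pt (d : ℕ) := EuclideanSpace ℝ (Fin d)

/-- The half-open axis-parallel cube with lower-left corner `c` and side length `2^k`. -/
def dyadicCube {d : ℕ} (c : Pt d) (k : ℤ) : Set (Pt d) :=
  {x | ∀ i, c i ≤ x i ∧ x i < c i + (2 : ℝ) ^ k}

/-- A dyadic grid on `ℝ^d`, described by the corners of its cubes at each scale: the cubes of
each scale `2^k` partition `ℝ^d`, and each cube of scale `2^{k-1}` is contained in a cube of
scale `2^k` (hence every cube is the disjoint union of its `2^d` children). -/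
structure DyadicGrid (d : ℕ) where
  corners : ℤ → Set (Pt d)
  partition : ∀ (k : ℤ) (x : Pt d), ∃! c, c ∈ corners k ∧ x ∈ dyadicCube c k
  nested : ∀ (k : ℤ), ∀ c' ∈ corners (k - 1),
    ∃ c ∈ corners k, dyadicCube c' (k - 1) ⊆ dyadicCube c k

/-- `h` is a (generalized) Haar function associated with the cube of corner `c` and scale
`2^k` of the grid with corner sets `corners`: `h` vanishes outside the cube and is constant
on each of its children. -/
def IsHaarOn {d : ℕ} (corners : ℤ → Set (Pt d)) (c : Pt d) (k : ℤ) (h : Pt d → ℝ) : Prop :=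
  (∀ x, x ∉ dyadicCube c k → h x = 0) ∧
  ∀ c' ∈ corners (k - 1), dyadicCube c' (k - 1) ⊆ dyadicCube c k →
    ∀ x ∈ dyadicCube c' (k - 1), ∀ y ∈ dyadicCube c' (k - 1), h x = h y


/-- Index set of the Haar shift kernel sum of complexity `(m,n)`: a scale `k` together with
corners of cubes `Q ∈ D` of scale `k`, `Q' ⊆ Q` of scale `k - m` and `Q'' ⊆ Q` of scale
`k - n`. -/
def ShiftIdx {d : ℕ} (D : DyadicGrid d) (m n : ℕ) : Type :=
  {q : ℤ × Pt d × Pt d × Pt d //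
    q.2.1 ∈ D.corners q.1 ∧
    q.2.2.1 ∈ D.corners (q.1 - m) ∧
    q.2.2.2 ∈ D.corners (q.1 - n) ∧
    dyadicCube q.2.2.1 (q.1 - m) ⊆ dyadicCube q.2.1 q.1 ∧
    dyadicCube q.2.2.2 (q.1 - n) ⊆ dyadicCube q.2.1 q.1}

/-!
A term of the kernel sum can be nonzero only if `x ∈ Q' ⊆ Q` and `y ∈ Q'' ⊆ Q`. Since the cubes
of one scale partition `ℝ^d`, this leaves at most one nonzero term per scale `2^k`, and it forces
`|x - y| ≤ √d · 2^k`. Each term is bounded by `|Q|⁻¹ = 2^{-kd}`, so the sum is dominated by a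
geometric series over the scales `2^k ≥ |x - y| / √d`, which is at most `2 (√d / |x - y|)^d`.
-/

namespace DyadicGrid

lemma eq_of_mem_dyadicCube {d : ℕ} (D : DyadicGrid d) {k : ℤ} {c₁ c₂ x : Pt d}
    (h₁ : c₁ ∈ D.corners k) (h₂ : c₂ ∈ D.corners k)
    (hx₁ : x ∈ dyadicCube c₁ k) (hx₂ : x ∈ dyadicCube c₂ k) : c₁ = c₂ :=
  (D.partition k x).unique ⟨h₁, hx₁⟩ ⟨h₂, hx₂⟩

end DyadicGrid

lemma dist_le_of_mem_dyadicCube {d : ℕ} {k : ℤ} {c u v : Pt d}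
    (hu : u ∈ dyadicCube c k) (hv : v ∈ dyadicCube c k) :
    dist u v ≤ √d * 2 ^ k := by
  have hcoord : ∀ i, dist (u i) (v i) ^ 2 ≤ ((2 : ℝ) ^ k) ^ 2 := fun i => by
    obtain ⟨hu₁, hu₂⟩ := hu i
    obtain ⟨hv₁, hv₂⟩ := hv i
    have : |u i - v i| ≤ 2 ^ k := abs_sub_le_iff.2 ⟨by linarith, by linarith⟩
    rw [Real.dist_eq]
    exact pow_le_pow_left₀ (abs_nonneg _) this 2
  calc dist u v = √(∑ i, dist (u i) (v i) ^ 2) := EuclideanSpace.dist_eq u v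
    _ ≤ √(∑ _i : Fin d, ((2 : ℝ) ^ k) ^ 2) :=
        Real.sqrt_le_sqrt (Finset.sum_le_sum fun i _ => hcoord i)
    _ = √d * 2 ^ k := by
      rw [Finset.sum_const, Finset.card_univ, Fintype.card_fin, nsmul_eq_mul,
        Real.sqrt_mul (Nat.cast_nonneg d), Real.sqrt_sq (by positivity)]

lemma summable_and_abs_tsum_le_of_injOn {ι κ : Type*} {f : ι → ℝ} {g : κ → ℝ} {s : ι → κ}
    (hs : InjOn s (Function.support f)) (hg : Summable g) (hg₀ : ∀ k, 0 ≤ g k)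
    (hfg : ∀ i ∈ Function.support f, |f i| ≤ g (s i)) :
    Summable f ∧ |∑' i, f i| ≤ ∑' k, g k := by
  have hbound : ∀ i : Function.support f, ‖f i‖ ≤ g (s i) := fun i => hfg i i.2
  have hnorm : Summable fun i : Function.support f => ‖f i‖ :=
    .of_nonneg_of_le (fun _ => norm_nonneg _) hbound (hg.comp_injective hs.injective)
  refine ⟨((hasSum_subtype_iff_of_support_subset subset_rfl).mp hnorm.of_norm.hasSum).summable, ?_⟩
  calc |∑' i, f i| = ‖∑' i : Function.support f, f i‖ := by
        rw [tsum_subtype_eq_of_support_subset subset_rfl, Real.norm_eq_abs]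
    _ ≤ ∑' i : Function.support f, ‖f i‖ := norm_tsum_le_tsum_norm hnorm
    _ ≤ ∑' k, g k := hnorm.tsum_le_tsum_of_inj _ hs.injective (fun k _ => hg₀ k) hbound hg

def dyadicTail (d : ℕ) (t : ℝ) (k : ℤ) : ℝ :=
  if t ≤ 2 ^ k then ((2 : ℝ) ^ (k * (d : ℤ)))⁻¹ else 0

lemma dyadicTail_nonneg (d : ℕ) (t : ℝ) (k : ℤ) : 0 ≤ dyadicTail d t k := by
  unfold dyadicTail
  split_ifs <;> positivity

lemma le_two_zpow_iff_clog_le {t : ℝ} (ht : 0 < t) {k : ℤ} : t ≤ 2 ^ k ↔ Int.clog 2 t ≤ k := by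
  simpa using Int.le_zpow_iff_clog_le (R := ℝ) (b := 2) one_lt_two (x := k) ht

lemma hasSum_dyadicTail {d : ℕ} (hd : 0 < d) {t : ℝ} (ht : 0 < t) :
    HasSum (dyadicTail d t)
      (((2 : ℝ) ^ (Int.clog 2 t * (d : ℤ)))⁻¹ * (1 - ((2 : ℝ) ^ d)⁻¹)⁻¹) := by
  set k₀ := Int.clog 2 t
  have hr₁ : ((2 : ℝ) ^ d)⁻¹ < 1 := inv_lt_one_of_one_lt₀ (one_lt_pow₀ one_lt_two hd.ne')
  have hshift : Function.Injective fun i : ℕ => k₀ + i :=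
    (add_right_injective k₀).comp Nat.cast_injective
  have hterm : ∀ i : ℕ,
      dyadicTail d t (k₀ + i) = ((2 : ℝ) ^ (k₀ * (d : ℤ)))⁻¹ * ((2 : ℝ) ^ d)⁻¹ ^ i := by
    intro i
    rw [dyadicTail, if_pos ((le_two_zpow_iff_clog_le ht).2 (by omega)), inv_pow, ← mul_inv,
      ← pow_mul, ← zpow_natCast (2 : ℝ) (d * i), ← zpow_add₀ two_ne_zero]
    congr 2
    push_cast
    ring
  have hzero : ∀ k ∉ Set.range fun i : ℕ => k₀ + i, dyadicTail d t k = 0 := by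
    intro k hk
    refine if_neg fun hle => hk ?_
    obtain ⟨i, hi⟩ := Int.le.dest ((le_two_zpow_iff_clog_le ht).1 hle)
    exact ⟨i, hi⟩
  refine (hshift.hasSum_iff hzero).mp ?_
  simpa only [Function.comp_def, hterm] using
    (hasSum_geometric_of_lt_one (by positivity) hr₁).mul_left ((2 : ℝ) ^ (k₀ * (d : ℤ)))⁻¹

lemma tsum_dyadicTail_le {d : ℕ} (hd : 0 < d) {t : ℝ} (ht : 0 < t) :
    ∑' k, dyadicTail d t k ≤ 2 / t ^ d := by
  rw [(hasSum_dyadicTail hd ht).tsum_eq, div_eq_mul_inv, ← inv_pow t d]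
  have hscale : ((2 : ℝ) ^ (Int.clog 2 t * (d : ℤ)))⁻¹ ≤ t⁻¹ ^ d := by
    rw [zpow_mul, zpow_natCast, ← inv_pow]
    exact pow_le_pow_left₀ (by positivity)
      (inv_anti₀ ht ((le_two_zpow_iff_clog_le ht).2 le_rfl)) d
  have hhalf : ((2 : ℝ) ^ d)⁻¹ ≤ 2⁻¹ := inv_anti₀ two_pos (le_self_pow₀ one_le_two hd.ne')
  have hpos : 0 < 1 - ((2 : ℝ) ^ d)⁻¹ := by linarith
  have hratio : (1 - ((2 : ℝ) ^ d)⁻¹)⁻¹ ≤ 2 := by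
    rw [inv_le_comm₀ hpos two_pos]
    linarith
  exact (mul_le_mul hscale hratio (inv_nonneg.2 hpos.le) (by positivity)).trans_eq (mul_comm _ _)

section ShiftKernel

variable {d : ℕ} {D : DyadicGrid d} {m n : ℕ} {H G : ℤ → Pt d → Pt d → Pt d → Pt d → ℝ}

def IsHaarShiftFamily (D : DyadicGrid d) (m n : ℕ) (H G : ℤ → Pt d → Pt d → Pt d → Pt d → ℝ) :
    Prop :=
  ∀ (k : ℤ) (c c' c'' : Pt d), c ∈ D.corners k → c' ∈ D.corners (k - m) →
    c'' ∈ D.corners (k - n) → dyadicCube c' (k - m) ⊆ dyadicCube c k →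
    dyadicCube c'' (k - n) ⊆ dyadicCube c k →
      IsHaarOn D.corners c' (k - m) (H k c c' c'') ∧
      IsHaarOn D.corners c'' (k - n) (G k c c' c'') ∧
      ∀ u v : Pt d, |H k c c' c'' u * G k c c' c'' v| ≤ 1

def shiftKernelTerm (H G : ℤ → Pt d → Pt d → Pt d → Pt d → ℝ) (x y : Pt d)
    (q : ShiftIdx D m n) : ℝ :=
  ((2 : ℝ) ^ (q.1.1 * (d : ℤ)))⁻¹ *
    H q.1.1 q.1.2.1 q.1.2.2.1 q.1.2.2.2 x * G q.1.1 q.1.2.1 q.1.2.2.1 q.1.2.2.2 y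

variable {x y : Pt d}

lemma mem_dyadicCube_of_shiftKernelTerm_ne_zero (hHG : IsHaarShiftFamily D m n H G)
    {q : ShiftIdx D m n} (hq : shiftKernelTerm H G x y q ≠ 0) :
    x ∈ dyadicCube q.1.2.2.1 (q.1.1 - m) ∧ y ∈ dyadicCube q.1.2.2.2 (q.1.1 - n) := by
  obtain ⟨⟨k, c, c', c''⟩, hc, hc', hc'', hsub', hsub''⟩ := q
  obtain ⟨hH, hG, -⟩ := hHG k c c' c'' hc hc' hc'' hsub' hsub''
  constructor
  · by_contra hx
    exact hq (by simp [shiftKernelTerm, hH.1 x hx])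
  · by_contra hy
    exact hq (by simp [shiftKernelTerm, hG.1 y hy])

lemma injOn_scale_support_shiftKernelTerm (hHG : IsHaarShiftFamily D m n H G) :
    InjOn (fun q : ShiftIdx D m n => q.1.1) (Function.support (shiftKernelTerm H G x y)) := by
  rintro ⟨⟨k, c₁, c₁', c₁''⟩, p₁⟩ hq₁ ⟨⟨_, c₂, c₂', c₂''⟩, p₂⟩ hq₂ (rfl : k = _)
  obtain ⟨hx₁, hy₁⟩ := mem_dyadicCube_of_shiftKernelTerm_ne_zero hHG hq₁
  obtain ⟨hx₂, hy₂⟩ := mem_dyadicCube_of_shiftKernelTerm_ne_zero hHG hq₂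
  obtain rfl := D.eq_of_mem_dyadicCube p₁.1 p₂.1 (p₁.2.2.2.1 hx₁) (p₂.2.2.2.1 hx₂)
  obtain rfl := D.eq_of_mem_dyadicCube p₁.2.1 p₂.2.1 hx₁ hx₂
  obtain rfl := D.eq_of_mem_dyadicCube p₁.2.2.1 p₂.2.2.1 hy₁ hy₂
  rfl

lemma abs_shiftKernelTerm_le_dyadicTail (hHG : IsHaarShiftFamily D m n H G)
    {q : ShiftIdx D m n} (hq : shiftKernelTerm H G x y q ≠ 0) :
    |shiftKernelTerm H G x y q| ≤ dyadicTail d (dist x y / √d) q.1.1 := by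
  obtain ⟨hx, hy⟩ := mem_dyadicCube_of_shiftKernelTerm_ne_zero hHG hq
  obtain ⟨⟨k, c, c', c''⟩, hc, hc', hc'', hsub', hsub''⟩ := q
  obtain ⟨-, -, hprod⟩ := hHG k c c' c'' hc hc' hc'' hsub' hsub''
  have hscale : dist x y / √d ≤ 2 ^ k :=
    div_le_of_le_mul₀ (Real.sqrt_nonneg _) (by positivity)
      ((dist_le_of_mem_dyadicCube (hsub' hx) (hsub'' hy)).trans_eq (mul_comm _ _))
  unfold shiftKernelTerm
  rw [dyadicTail, if_pos hscale, mul_assoc, abs_mul,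
    abs_of_pos (by positivity : (0 : ℝ) < ((2 : ℝ) ^ (k * (d : ℤ)))⁻¹)]
  exact mul_le_of_le_one_right (by positivity) (hprod x y)

end ShiftKernel

/-- Size bound for the Haar shift kernel: if for every cube `Q ∈ D` and subcubes
`Q', Q'' ⊆ Q` of side lengths `2^{-m}ℓ(Q)`, `2^{-n}ℓ(Q)` we are given Haar functions
`H` (on `Q'`) and `G` (on `Q''`) with `‖H·G‖_∞ ≤ 1`, then for `x ≠ y`,
`|Σ_{Q ∈ D} |Q|⁻¹ Σ_{Q',Q'' ⊆ Q} H(x)·G(y)| ≤ C(d)/|x − y|^d`. -/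
theorem haar_shift_kernel_bound (d : ℕ) :
    ∃ C : ℝ, 0 < C ∧
      ∀ (D : DyadicGrid d) (m n : ℕ)
        (H G : ℤ → Pt d → Pt d → Pt d → (Pt d → ℝ)),
        (∀ (k : ℤ) (c c' c'' : Pt d), c ∈ D.corners k → c' ∈ D.corners (k - m) →
          c'' ∈ D.corners (k - n) → dyadicCube c' (k - m) ⊆ dyadicCube c k →
          dyadicCube c'' (k - n) ⊆ dyadicCube c k →
            IsHaarOn D.corners c' (k - m) (H k c c' c'') ∧
            IsHaarOn D.corners c'' (k - n) (G k c c' c'') ∧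
            ∀ u v : Pt d, |H k c c' c'' u * G k c c' c'' v| ≤ 1) →
        ∀ x y : Pt d, x ≠ y →
          Summable (fun q : ShiftIdx D m n =>
            ((2 : ℝ) ^ (q.1.1 * (d : ℤ)))⁻¹ *
              H q.1.1 q.1.2.1 q.1.2.2.1 q.1.2.2.2 x * G q.1.1 q.1.2.1 q.1.2.2.1 q.1.2.2.2 y) ∧
          |∑' q : ShiftIdx D m n,
              ((2 : ℝ) ^ (q.1.1 * (d : ℤ)))⁻¹ *
                H q.1.1 q.1.2.1 q.1.2.2.1 q.1.2.2.2 x *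
                G q.1.1 q.1.2.1 q.1.2.2.1 q.1.2.2.2 y| ≤
            C / dist x y ^ d := by
  rcases Nat.eq_zero_or_pos d with rfl | hd
  · exact ⟨1, one_pos, fun D m n H G _ x y hxy => absurd (Subsingleton.elim x y) hxy⟩
  have hsqrt : 0 < √(d : ℝ) := Real.sqrt_pos.2 (Nat.cast_pos.2 hd)
  refine ⟨2 * √d ^ d, mul_pos two_pos (pow_pos hsqrt d), fun D m n H G hHG x y hxy => ?_⟩
  have ht : 0 < dist x y / √d := div_pos (dist_pos.2 hxy) hsqrt
  obtain ⟨hsum, hle⟩ := summable_and_abs_tsum_le_of_injOn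
    (injOn_scale_support_shiftKernelTerm hHG) (hasSum_dyadicTail hd ht).summable
    (dyadicTail_nonneg d _) fun q hq => abs_shiftKernelTerm_le_dyadicTail hHG hq
  refine ⟨hsum, hle.trans ((tsum_dyadicTail_le hd ht).trans_eq ?_)⟩
  rw [div_pow, div_div_eq_mul_div]
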